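/- Under the hypotheses on h giving the relations F_c(t) = 2 f_c(t)/(5 - 4cos t) and F_s(t) = 6 f_s(t)/(5 - 4cos t), one has for all real t: ∫₁^∞ cos(xt) dh(x) = ((1 - 8sin²(t/2))/(1 + 8sin²(t/2)))·∫₀¹ cos(xt) dh(x), and ∫₁^∞ sin(xt) dh(x) = ((5 - 8sin²(t/2))/(1 + 8sin²(t/2)))·∫₀¹ sin(xt) dh(x). -/

import Mathlib

/-!
The functional equations give `h (x + 1) = h x / 2 + 1` on `[0, ∞)` and `h (1 - x) = 1 - h x` on
`[0, 1]`. For the measure `dh` this says that translation by `1` carries `dh` on `(0, ∞)` to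
`2 dh` on `(1, ∞)`, and that `x ↦ 1 - x` preserves `dh` on `(0, 1]`. Expanding `cos ((x + 1) t)`,
`cos ((1 - x) t)` and their sine analogues turns these into a linear system for the integrals of
`cos (x t)` and `sin (x t)` over `(0, 1]` and `(1, ∞)`, with determinant
`5 - 4 cos t = 1 + 8 sin² (t / 2) > 0`.
-/

open MeasureTheory Set Real
open scoped ENNReal

namespace StieltjesFunction

theorem nullSingletonClass_of_continuous (f : StieltjesFunction ℝ) (hf : Continuous f) :
    NullSingletonClass f.measure :=
  ⟨fun a => by
    rw [f.measure_singleton, hf.continuousWithinAt.leftLim_eq, sub_self, ENNReal.ofReal_zero]⟩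

theorem smul_map_add_restrict_Ioi (f : StieltjesFunction ℝ) {a b r k : ℝ} (hr : 0 ≤ r)
    (hf : ∀ x ≥ a, f (x + b) = r * f x + k) :
    ENNReal.ofReal r • (f.measure.restrict (Ioi a)).map (· + b) =
      f.measure.restrict (Ioi (a + b)) := by
  have key : ∀ u v, (ENNReal.ofReal r • (f.measure.restrict (Ioi a)).map (· + b)) (Ioc u v) =
      f.measure.restrict (Ioi (a + b)) (Ioc u v) := by
    intro u v
    rw [Measure.smul_apply, Measure.map_apply (measurable_add_const b) measurableSet_Ioc,
      preimage_add_const_Ioc, Measure.restrict_apply measurableSet_Ioc,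
      Measure.restrict_apply measurableSet_Ioc, Ioc_inter_Ioi, Ioc_inter_Ioi, f.measure_Ioc,
      f.measure_Ioc, smul_eq_mul, ← ENNReal.ofReal_mul hr]
    rcases le_or_gt (v - b) a with hv | hv
    · have h₁ : f (v - b) ≤ f ((u - b) ⊔ a) := f.mono (hv.trans le_sup_right)
      have h₂ : f v ≤ f (u ⊔ (a + b)) := f.mono (by linarith [le_sup_right (a := u) (b := a + b)])
      rw [ENNReal.ofReal_of_nonpos (mul_nonpos_of_nonneg_of_nonpos hr (by linarith)),
        ENNReal.ofReal_of_nonpos (by linarith)]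
    · have hmax : u ⊔ (a + b) = (u - b) ⊔ a + b := by rw [← max_add_add_right, sub_add_cancel]
      have hv' := hf (v - b) hv.le
      rw [sub_add_cancel] at hv'
      rw [hmax, hf _ le_sup_right, hv']
      ring_nf
  exact Measure.ext_of_Ioc' _ _ (fun u v _ => key u v ▸ measure_Ioc_lt_top.ne) fun u v _ => key u v

/-- Continuity rules out atoms, which the reflection would move between the ends of `Ioc a b`. -/
theorem map_sub_restrict_Ioc (f : StieltjesFunction ℝ) (hf : Continuous f) {a b : ℝ}
    (hsymm : ∀ x ∈ Icc a b, f (a + b - x) = f a + f b - f x) :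
    (f.measure.restrict (Ioc a b)).map (a + b - ·) = f.measure.restrict (Ioc a b) := by
  have := f.nullSingletonClass_of_continuous hf
  have := isFiniteMeasure_restrict.2 (measure_Ioc_lt_top (μ := f.measure) (a := a) (b := b)).ne
  refine Measure.ext_of_Iic _ _ fun y => ?_
  rw [Measure.map_apply (measurable_const_sub _) measurableSet_Iic, preimage_const_sub_Iic,
    Measure.restrict_apply measurableSet_Ici, Measure.restrict_apply measurableSet_Iic,
    ← measure_congr (Ioi_ae_eq_Ici.inter (ae_eq_refl (Ioc a b))), inter_comm, Ioc_inter_Ioi,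
    inter_comm, Ioc_inter_Iic, f.measure_Ioc, f.measure_Ioc]
  rcases le_or_gt y a with hya | hay
  · have h₁ : f b ≤ f (a ⊔ (a + b - y)) := f.mono (le_sup_of_le_right (by linarith))
    have h₂ : f (b ⊓ y) ≤ f a := f.mono ((min_le_right b y).trans hya)
    rw [ENNReal.ofReal_of_nonpos (by linarith), ENNReal.ofReal_of_nonpos (by linarith)]
  rcases le_or_gt b y with hby | hyb
  · rw [max_eq_left (by linarith), min_eq_left hby]
  · rw [max_eq_right (by linarith), min_eq_right hyb.le, hsymm y ⟨hay.le, hyb.le⟩]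
    ring_nf

end StieltjesFunction

noncomputable def cosTransform (μ : Measure ℝ) (s : Set ℝ) (t : ℝ) : ℝ := ∫ x in s, cos (x * t) ∂μ

noncomputable def sinTransform (μ : Measure ℝ) (s : Set ℝ) (t : ℝ) : ℝ := ∫ x in s, sin (x * t) ∂μ

section
variable {μ : Measure ℝ} {s : Set ℝ}

theorem integrableOn_cos_mul (hs : μ s ≠ ∞) (t : ℝ) :
    IntegrableOn (fun x => cos (x * t)) s μ :=
  Measure.integrableOn_of_bounded (M := 1) hs (by fun_prop : Continuous _).aestronglyMeasurable
    (ae_of_all _ fun x => by simpa using abs_cos_le_one (x * t))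

theorem integrableOn_sin_mul (hs : μ s ≠ ∞) (t : ℝ) :
    IntegrableOn (fun x => sin (x * t)) s μ :=
  Measure.integrableOn_of_bounded (M := 1) hs (by fun_prop : Continuous _).aestronglyMeasurable
    (ae_of_all _ fun x => by simpa using abs_sin_le_one (x * t))

theorem setIntegral_cos_mul_add (hs : μ s ≠ ∞) (t u : ℝ) :
    ∫ x in s, cos (x * t + u) ∂μ = cos u * cosTransform μ s t - sin u * sinTransform μ s t := by
  simp_rw [cos_add]
  rw [integral_sub ((integrableOn_cos_mul hs t).mul_const _)
    ((integrableOn_sin_mul hs t).mul_const _), integral_mul_const, integral_mul_const,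
    cosTransform, sinTransform]
  ring

theorem setIntegral_sin_mul_add (hs : μ s ≠ ∞) (t u : ℝ) :
    ∫ x in s, sin (x * t + u) ∂μ = cos u * sinTransform μ s t + sin u * cosTransform μ s t := by
  simp_rw [sin_add]
  rw [integral_add ((integrableOn_sin_mul hs t).mul_const _)
    ((integrableOn_cos_mul hs t).mul_const _), integral_mul_const, integral_mul_const,
    cosTransform, sinTransform]
  ring

end

section
variable {μ : Measure ℝ} {a b : ℝ}

theorem cosTransform_Ioi_eq_add (hab : a ≤ b) (hfin : μ (Ioi a) ≠ ∞) (t : ℝ) :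
    cosTransform μ (Ioi a) t = cosTransform μ (Ioc a b) t + cosTransform μ (Ioi b) t := by
  have hint := integrableOn_cos_mul hfin t
  rw [cosTransform, ← Ioc_union_Ioi_eq_Ioi hab, setIntegral_union (Ioc_disjoint_Ioi le_rfl)
    measurableSet_Ioi (hint.mono_set Ioc_subset_Ioi_self) (hint.mono_set (Ioi_subset_Ioi hab))]
  rfl

theorem sinTransform_Ioi_eq_add (hab : a ≤ b) (hfin : μ (Ioi a) ≠ ∞) (t : ℝ) :
    sinTransform μ (Ioi a) t = sinTransform μ (Ioc a b) t + sinTransform μ (Ioi b) t := by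
  have hint := integrableOn_sin_mul hfin t
  rw [sinTransform, ← Ioc_union_Ioi_eq_Ioi hab, setIntegral_union (Ioc_disjoint_Ioi le_rfl)
    measurableSet_Ioi (hint.mono_set Ioc_subset_Ioi_self) (hint.mono_set (Ioi_subset_Ioi hab))]
  rfl

theorem cosTransform_Ioi_add_of_map {r : ℝ} (hr : 0 ≤ r) (hfin : μ (Ioi a) ≠ ∞)
    (hshift : ENNReal.ofReal r • (μ.restrict (Ioi a)).map (· + b) = μ.restrict (Ioi (a + b)))
    (t : ℝ) :
    cosTransform μ (Ioi (a + b)) t =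
      r * (cos (b * t) * cosTransform μ (Ioi a) t - sin (b * t) * sinTransform μ (Ioi a) t) := by
  rw [cosTransform, ← hshift, integral_smul_measure,
    (measurableEmbedding_addRight b).integral_map, ENNReal.toReal_ofReal hr, smul_eq_mul]
  simp_rw [add_mul]
  rw [setIntegral_cos_mul_add hfin]

theorem sinTransform_Ioi_add_of_map {r : ℝ} (hr : 0 ≤ r) (hfin : μ (Ioi a) ≠ ∞)
    (hshift : ENNReal.ofReal r • (μ.restrict (Ioi a)).map (· + b) = μ.restrict (Ioi (a + b)))
    (t : ℝ) :
    sinTransform μ (Ioi (a + b)) t =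
      r * (cos (b * t) * sinTransform μ (Ioi a) t + sin (b * t) * cosTransform μ (Ioi a) t) := by
  rw [sinTransform, ← hshift, integral_smul_measure,
    (measurableEmbedding_addRight b).integral_map, ENNReal.toReal_ofReal hr, smul_eq_mul]
  simp_rw [add_mul]
  rw [setIntegral_sin_mul_add hfin]

theorem cosTransform_Ioc_of_map (hfin : μ (Ioc a b) ≠ ∞)
    (hrefl : (μ.restrict (Ioc a b)).map (a + b - ·) = μ.restrict (Ioc a b)) (t : ℝ) :
    cosTransform μ (Ioc a b) t = cos ((a + b) * t) * cosTransform μ (Ioc a b) t +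
      sin ((a + b) * t) * sinTransform μ (Ioc a b) t := by
  have hrw : ∀ x, cos ((a + b - x) * t) = cos (x * -t + (a + b) * t) := fun x => by ring_nf
  conv_lhs => rw [cosTransform, ← hrefl, (measurableEmbedding_subLeft (a + b)).integral_map]
  simp_rw [hrw]
  rw [setIntegral_cos_mul_add hfin]
  simp only [cosTransform, sinTransform, mul_neg, cos_neg, sin_neg, integral_neg]
  ring

theorem sinTransform_Ioc_of_map (hfin : μ (Ioc a b) ≠ ∞)
    (hrefl : (μ.restrict (Ioc a b)).map (a + b - ·) = μ.restrict (Ioc a b)) (t : ℝ) :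
    sinTransform μ (Ioc a b) t = sin ((a + b) * t) * cosTransform μ (Ioc a b) t -
      cos ((a + b) * t) * sinTransform μ (Ioc a b) t := by
  have hrw : ∀ x, sin ((a + b - x) * t) = sin (x * -t + (a + b) * t) := fun x => by ring_nf
  conv_lhs => rw [sinTransform, ← hrefl, (measurableEmbedding_subLeft (a + b)).integral_map]
  simp_rw [hrw]
  rw [setIntegral_sin_mul_add hfin]
  simp only [cosTransform, sinTransform, mul_neg, cos_neg, sin_neg, integral_neg]
  ring

end

theorem cosTransform_sinTransform_Ioi_one {μ : Measure ℝ} (hfin : μ (Ioi 0) ≠ ∞)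
    (hshift : ENNReal.ofReal (1 / 2) • (μ.restrict (Ioi 0)).map (· + 1) = μ.restrict (Ioi 1))
    (hrefl : (μ.restrict (Ioc 0 1)).map (1 - ·) = μ.restrict (Ioc 0 1)) (t : ℝ) :
    (5 - 4 * cos t) * cosTransform μ (Ioi 1) t = (4 * cos t - 3) * cosTransform μ (Ioc 0 1) t ∧
      (5 - 4 * cos t) * sinTransform μ (Ioi 1) t =
        (4 * cos t + 1) * sinTransform μ (Ioc 0 1) t := by
  have hfin' : μ (Ioc 0 1) ≠ ∞ := measure_ne_top_of_subset Ioc_subset_Ioi_self hfin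
  have hshift' : ENNReal.ofReal (1 / 2) • (μ.restrict (Ioi 0)).map (· + 1) =
      μ.restrict (Ioi (0 + 1)) := by rwa [zero_add]
  have hrefl' : (μ.restrict (Ioc 0 1)).map (0 + 1 - ·) = μ.restrict (Ioc 0 1) := by
    rwa [zero_add]
  have hA := cosTransform_Ioi_add_of_map (by norm_num) hfin hshift' t
  have hB := sinTransform_Ioi_add_of_map (by norm_num) hfin hshift' t
  have hC := cosTransform_Ioc_of_map hfin' hrefl' t
  have hS := sinTransform_Ioc_of_map hfin' hrefl' t
  simp only [zero_add, one_mul] at hA hB hC hS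
  rw [cosTransform_Ioi_eq_add zero_le_one hfin, sinTransform_Ioi_eq_add zero_le_one hfin] at hA hB
  have hcs := sin_sq_add_cos_sq t
  -- the system in the two unknowns over `Ioi 1` has determinant `(2 - cos t) ^ 2 + sin t ^ 2`
  constructor
  · linear_combination (4 - 2 * cos t) * hA - 2 * sin t * hB + 2 * hC -
      (cosTransform μ (Ioi 1) t + cosTransform μ (Ioc 0 1) t) * hcs
  · linear_combination 2 * sin t * hA + (4 - 2 * cos t) * hB - 2 * hS -
      (sinTransform μ (Ioi 1) t + sinTransform μ (Ioc 0 1) t) * hcs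

section Minkowski
variable {f : ℝ → ℝ}

theorem minkowski_apply_zero (heq1 : ∀ x ≥ (0:ℝ), f x = 2 * f (x / (x + 1))) : f 0 = 0 := by
  have := heq1 0 le_rfl
  norm_num at this
  linarith

theorem minkowski_apply_one (heq2 : ∀ x > (0:ℝ), f x + f (1 / x) = 2) : f 1 = 1 := by
  have := heq2 1 one_pos
  norm_num at this
  linarith

theorem minkowski_apply_add_one (heq1 : ∀ x ≥ (0:ℝ), f x = 2 * f (x / (x + 1)))
    (heq2 : ∀ x > (0:ℝ), f x + f (1 / x) = 2) (x : ℝ) (hx : x ≥ 0) :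
    f (x + 1) = 1 / 2 * f x + 1 := by
  rcases hx.eq_or_lt with rfl | hx
  · rw [zero_add, minkowski_apply_zero heq1, minkowski_apply_one heq2]
    norm_num
  have hinv : f (1 / x) = 2 * f (1 / (x + 1)) := by
    rw [heq1 (1 / x) (by positivity), show 1 / x / (1 / x + 1) = 1 / (x + 1) by field_simp; ring]
  linarith [heq2 x hx, heq2 (x + 1) (by linarith)]

end Minkowski

theorem stmt9_general (h : StieltjesFunction ℝ) (hcont : Continuous (h : ℝ → ℝ))
    (hmass : h.measure (Set.Ici (0:ℝ)) = 2)
    (hsym : ∀ x ∈ Set.Icc (0:ℝ) 1, h x = 1 - h (1 - x))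
    (heq1 : ∀ x ≥ (0:ℝ), h x = 2 * h (x / (x + 1)))
    (heq2 : ∀ x > (0:ℝ), h x + h (1 / x) = 2) :
    ∀ t : ℝ,
      (∫ x in Set.Ioi (1:ℝ), Real.cos (x * t) ∂h.measure) =
        ((1 - 8 * Real.sin (t / 2) ^ 2) / (1 + 8 * Real.sin (t / 2) ^ 2)) *
          ∫ x in Set.Icc (0:ℝ) 1, Real.cos (x * t) ∂h.measure ∧
      (∫ x in Set.Ioi (1:ℝ), Real.sin (x * t) ∂h.measure) =
        ((5 - 8 * Real.sin (t / 2) ^ 2) / (1 + 8 * Real.sin (t / 2) ^ 2)) *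
          ∫ x in Set.Icc (0:ℝ) 1, Real.sin (x * t) ∂h.measure := by
  intro t
  have h0 := minkowski_apply_zero heq1
  have h1 := minkowski_apply_one heq2
  have := h.nullSingletonClass_of_continuous hcont
  have hfin : h.measure (Ioi 0) ≠ ∞ :=
    measure_ne_top_of_subset Ioi_subset_Ici_self (hmass ▸ ENNReal.ofNat_ne_top)
  have hshift := h.smul_map_add_restrict_Ioi (a := 0) (by norm_num)
    (minkowski_apply_add_one heq1 heq2)
  have hrefl := h.map_sub_restrict_Ioc hcont (a := 0) (b := 1) fun x hx => by
    rw [zero_add, h0, h1]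
    linarith [hsym x hx]
  rw [zero_add] at hshift hrefl
  obtain ⟨hcos, hsin⟩ := cosTransform_sinTransform_Ioi_one hfin hshift hrefl t
  rw [cosTransform, cosTransform] at hcos
  rw [sinTransform, sinTransform] at hsin
  have hsin_half : 8 * sin (t / 2) ^ 2 = 4 - 4 * cos t := by
    rw [sin_sq_eq_half_sub, mul_div_cancel₀ _ two_ne_zero]
    ring
  have hpos : 0 < 5 - 4 * cos t := by linarith [cos_le_one t]
  rw [integral_Icc_eq_integral_Ioc, integral_Icc_eq_integral_Ioc, hsin_half,
    div_mul_eq_mul_div, div_mul_eq_mul_div, eq_div_iff (by linarith), eq_div_iff (by linarith)]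
  exact ⟨by linear_combination hcos, by linear_combination hsin⟩

/-- Under the Minkowski-type hypotheses on `h`, for all real `t`:
`∫₁^∞ cos(xt) dh = ((1 - 8 sin²(t/2))/(1 + 8 sin²(t/2))) ∫₀¹ cos(xt) dh` and
`∫₁^∞ sin(xt) dh = ((5 - 8 sin²(t/2))/(1 + 8 sin²(t/2))) ∫₀¹ sin(xt) dh`. -/
theorem stmt9 (h : StieltjesFunction ℝ) (hcont : Continuous (h : ℝ → ℝ))
    (hmass : h.measure (Set.Ici (0:ℝ)) = 2)
    (hmass1 : h.measure (Set.Icc (0:ℝ) 1) = 1)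
    (hsym : ∀ x ∈ Set.Icc (0:ℝ) 1, h x = 1 - h (1 - x))
    (heq1 : ∀ x ≥ (0:ℝ), h x = 2 * h (x / (x + 1)))
    (heq2 : ∀ x > (0:ℝ), h x + h (1 / x) = 2) :
    ∀ t : ℝ,
      (∫ x in Set.Ioi (1:ℝ), Real.cos (x * t) ∂h.measure) =
        ((1 - 8 * Real.sin (t / 2) ^ 2) / (1 + 8 * Real.sin (t / 2) ^ 2)) *
          ∫ x in Set.Icc (0:ℝ) 1, Real.cos (x * t) ∂h.measure ∧
      (∫ x in Set.Ioi (1:ℝ), Real.sin (x * t) ∂h.measure) =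
        ((5 - 8 * Real.sin (t / 2) ^ 2) / (1 + 8 * Real.sin (t / 2) ^ 2)) *
          ∫ x in Set.Icc (0:ℝ) 1, Real.sin (x * t) ∂h.measure :=
  stmt9_general h hcont hmass hsym heq1 heq2
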